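/- Let s > 0 and let α be a real number with −1/2 < α < 2s + 1/2. Denote by ψ̂_s the unitary Fourier transform of ψ_s, ψ̂_s(ξ) = (1/√(2π))·∫_ℝ e^{−i·ξ·y}·ψ_s(y) dy. Then ∫_ℝ |ξ|^{2α}·|ψ̂_s(ξ)|² dξ = ( Γ(s+1/2)² / (s·Γ(2s)·Γ(s)²) ) · Γ(α+1/2) · Γ(2s−α+1/2). Moreover, if α ≥ 2s + 1/2 then ∫_ℝ |ξ|^{2α}·|ψ̂_s(ξ)|² dξ = ∞. -/

import Mathlib

/-!
Substituting `v = (|y|/2)·e^t` in the Bessel integral exhibits `ψ_s` as a Gamma mixture of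
Gaussians, `ψ_s(y) = Γ(s)⁻¹ ∫₀^∞ v^{s-1} e^{-v} e^{-y²/(4v)} dv`. Transforming the Gaussians
under the integral (Fubini) gives `ψ̂_s(ξ) = √2 Γ(s+1/2)/Γ(s) · (1+ξ²)^{-(s+1/2)}`, so the weighted
norm is a multiple of the Beta-type integral `∫ |ξ|^{2α} (1+ξ²)^{-(2s+1)} dξ`. Writing
`(1+ξ²)^{-b}` once more as a Gamma integral and integrating the Gaussian moments first evaluates
it; for `α ≥ 2s + 1/2` the integrand is at least a multiple of `1/ξ` for `ξ > 1`.
-/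

open MeasureTheory Real Filter Set

/-- The modified Bessel function of the second kind, for `y > 0` given by
`K_s(y) = ∫_0^∞ e^{−y·cosh t}·cosh(s·t) dt`. -/
noncomputable def besselK (s y : ℝ) : ℝ :=
  ∫ t in Set.Ioi (0 : ℝ), Real.exp (-(y * Real.cosh t)) * Real.cosh (s * t)

/-- `ψ_s(y) = (2^{1−s}/Γ(s))·|y|^s·K_s(|y|)` for `y ≠ 0`, and `ψ_s(0) = 1`. -/
noncomputable def psi (s : ℝ) (y : ℝ) : ℝ :=
  if y = 0 then 1
  else (2 : ℝ) ^ (1 - s) / Real.Gamma s * |y| ^ s * besselK s |y|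

/-- The unitary Fourier transform of `ψ_s`. -/
noncomputable def psiHat (s : ℝ) (ξ : ℝ) : ℂ :=
  (1 / (Real.sqrt (2 * Real.pi)) : ℂ) *
    ∫ y : ℝ, Complex.exp (-(Complex.I * ξ * y)) * (psi s y : ℂ)


section Substitution

variable {E : Type*} [NormedAddCommGroup E] [NormedSpace ℝ E] {c : ℝ}

lemma image_univ_const_mul_exp (hc : 0 < c) : (fun t ↦ c * rexp t) '' univ = Ioi 0 := by
  rw [image_univ, ← image_univ, show (fun t ↦ c * rexp t) = (c * ·) ∘ rexp from rfl,
    image_comp, image_univ, Real.range_exp, image_mul_left_Ioi hc, mul_zero]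

lemma integral_Ioi_zero_eq_integral_const_mul_exp (hc : 0 < c) (g : ℝ → E) :
    ∫ v in Ioi 0, g v = ∫ t, (c * rexp t) • g (c * rexp t) := by
  rw [← image_univ_const_mul_exp hc, integral_image_eq_integral_abs_deriv_smul MeasurableSet.univ
    (fun t _ ↦ ((hasDerivAt_exp t).const_mul c).hasDerivWithinAt)
    (fun a _ b _ h ↦ exp_injective (mul_left_cancel₀ hc.ne' h)), setIntegral_univ]
  simp_rw [abs_of_pos (mul_pos hc (exp_pos _))]

lemma integrableOn_Ioi_zero_iff_integrable_const_mul_exp (hc : 0 < c) (g : ℝ → E) :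
    IntegrableOn g (Ioi 0) ↔ Integrable (fun t ↦ (c * rexp t) • g (c * rexp t)) := by
  rw [← image_univ_const_mul_exp hc, integrableOn_image_iff_integrableOn_abs_deriv_smul
    MeasurableSet.univ (fun t _ ↦ ((hasDerivAt_exp t).const_mul c).hasDerivWithinAt)
    (fun a _ b _ h ↦ exp_injective (mul_left_cancel₀ hc.ne' h)), integrableOn_univ]
  simp_rw [abs_of_pos (mul_pos hc (exp_pos _))]

end Substitution

lemma integral_exp_mul_exp_neg_mul_cosh {s y : ℝ}
    (h : Integrable fun t ↦ rexp (s * t) * rexp (-(y * cosh t))) :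
    ∫ t, rexp (s * t) * rexp (-(y * cosh t)) = 2 * besselK s y := by
  set f : ℝ → ℝ := fun t ↦ rexp (s * t) * rexp (-(y * cosh t))
  set k : ℝ → ℝ := fun t ↦ rexp (-(y * cosh t)) * cosh (s * t)
  have hk : ∀ t, f t + f (-t) = 2 * k |t| := fun t ↦ by
    rcases abs_choice t with h | h <;>
    · simp only [f, k, h, cosh_neg, mul_neg, Real.cosh_eq (s * t)]
      ring
  have hsymm : ∫ t, (f t + f (-t)) = 2 * ∫ t, f t := by
    rw [integral_add h h.comp_neg, integral_neg_eq_self f, two_mul]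
  have heven : ∫ t, (f t + f (-t)) = 2 * (2 * besselK s y) := by
    simp_rw [hk]
    rw [integral_const_mul, integral_comp_abs, besselK]
  linarith

noncomputable def psiKernel (s v y : ℝ) : ℝ :=
  v ^ (s - 1) * rexp (-v) * rexp (-(4 * v)⁻¹ * y ^ 2)

lemma psiKernel_nonneg (s y : ℝ) {v : ℝ} (hv : 0 ≤ v) : 0 ≤ psiKernel s v y := by
  unfold psiKernel; positivity

lemma integrableOn_psiKernel {s : ℝ} (hs : 0 < s) (y : ℝ) :
    IntegrableOn (fun v ↦ psiKernel s v y) (Ioi 0) := by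
  refine (GammaIntegral_convergent hs).mono' (by unfold psiKernel; fun_prop) ?_
  filter_upwards [ae_restrict_mem measurableSet_Ioi] with v (hv : 0 < v)
  rw [norm_of_nonneg (psiKernel_nonneg s y hv.le), psiKernel, mul_comm (v ^ _)]
  refine mul_le_of_le_one_right (by positivity) ?_
  rw [exp_le_one_iff, neg_mul, neg_nonpos]
  positivity

lemma const_mul_exp_smul_psiKernel (s : ℝ) {y : ℝ} (hy : 0 < y) (t : ℝ) :
    (y / 2 * rexp t) • psiKernel s (y / 2 * rexp t) y
      = (y / 2) ^ s * (rexp (s * t) * rexp (-(y * cosh t))) := by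
  have hy2 : 0 < y / 2 := by positivity
  have hpow : (y / 2 * rexp t) * (y / 2 * rexp t) ^ (s - 1) = (y / 2) ^ s * rexp (s * t) := by
    rw [rpow_sub_one (by positivity), mul_div_cancel₀ _ (by positivity),
      mul_rpow hy2.le (exp_pos t).le, ← exp_mul, mul_comm t]
  have hcosh : rexp (-(y / 2 * rexp t)) * rexp (-(4 * (y / 2 * rexp t))⁻¹ * y ^ 2)
      = rexp (-(y * cosh t)) := by
    rw [← exp_add, cosh_eq, exp_neg t]
    congr 1
    field_simp
    ring
  rw [smul_eq_mul, psiKernel, ← hcosh]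
  linear_combination
    (rexp (-(y / 2 * rexp t)) * rexp (-(4 * (y / 2 * rexp t))⁻¹ * y ^ 2)) * hpow

lemma integral_psiKernel_eq_besselK {s : ℝ} (hs : 0 < s) {y : ℝ} (hy : 0 < y) :
    ∫ v in Ioi 0, psiKernel s v y = 2 * (y / 2) ^ s * besselK s y := by
  have hy2 : 0 < y / 2 := by positivity
  have hint := (integrableOn_Ioi_zero_iff_integrable_const_mul_exp hy2 _).mp
    (integrableOn_psiKernel hs y)
  simp_rw [const_mul_exp_smul_psiKernel s hy] at hint
  rw [integral_Ioi_zero_eq_integral_const_mul_exp hy2]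
  simp_rw [const_mul_exp_smul_psiKernel s hy]
  rw [integral_const_mul, integral_exp_mul_exp_neg_mul_cosh
    ((integrable_const_mul_iff (by positivity : (y / 2) ^ s ≠ 0).isUnit _).mp hint)]
  ring

lemma psi_eq_integral_psiKernel {s : ℝ} (hs : 0 < s) (y : ℝ) :
    psi s y = (Real.Gamma s)⁻¹ * ∫ v in Ioi 0, psiKernel s v y := by
  rcases eq_or_ne y 0 with rfl | hy
  · have : ∫ v in Ioi 0, psiKernel s v 0 = Real.Gamma s := by
      simp only [psiKernel, Gamma_eq_integral hs]
      simp [mul_comm]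
    rw [psi, if_pos rfl, this, inv_mul_cancel₀ (Gamma_pos_of_pos hs).ne']
  · have hy' : 0 < |y| := abs_pos.mpr hy
    have habs : ∀ v, psiKernel s v y = psiKernel s v |y| := fun v ↦ by simp [psiKernel]
    simp_rw [habs]
    rw [psi, if_neg hy, integral_psiKernel_eq_besselK hs hy', div_rpow hy'.le two_pos.le,
      rpow_sub two_pos, rpow_one]
    field_simp

open Complex in
lemma fourier_psiKernel (s : ℝ) {v : ℝ} (hv : 0 < v) (ξ : ℝ) :
    ∫ y : ℝ, cexp (-(I * ξ * y)) * (psiKernel s v y : ℂ)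
      = (√(4 * π) * (v ^ (s + 1 / 2 - 1) * rexp (-((1 + ξ ^ 2) * v))) : ℝ) := by
  have hb : 0 < ((4 * v : ℂ)⁻¹).re := by
    rw [← ofReal_ofNat, ← ofReal_mul, ← ofReal_inv, ofReal_re]; positivity
  have hpt : ∀ y : ℝ, cexp (-(I * ξ * y)) * (psiKernel s v y : ℂ)
      = (v ^ (s - 1) * rexp (-v) : ℝ) *
          (cexp (I * (-ξ) * y) * cexp (-(4 * (v : ℂ))⁻¹ * y ^ 2)) := by
    intro y
    simp only [psiKernel, ofReal_mul, ofReal_exp]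
    push_cast
    ring_nf
  have hsqrt : ((π : ℂ) / (4 * (v : ℂ))⁻¹) ^ (1 / 2 : ℂ) = (√(4 * π * v) : ℝ) := by
    rw [show (π : ℂ) / (4 * (v : ℂ))⁻¹ = ((4 * π * v : ℝ) : ℂ) by push_cast; field_simp,
      Real.sqrt_eq_rpow, ofReal_cpow (by positivity)]
    norm_num
  have hexp : cexp (-(-(ξ : ℂ)) ^ 2 / (4 * (4 * (v : ℂ))⁻¹)) = (rexp (-(ξ ^ 2 * v)) : ℝ) := by
    rw [ofReal_exp]
    push_cast
    congr 1
    field_simp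
  simp_rw [hpt]
  rw [integral_const_mul, fourierIntegral_gaussian hb, hsqrt, hexp, ← ofReal_mul, ← ofReal_mul]
  congr 1
  rw [Real.sqrt_mul (by positivity), Real.sqrt_eq_rpow v,
    show s + 1 / 2 - 1 = s - 1 + 1 / 2 by ring, rpow_add hv,
    add_mul, one_mul, neg_add, Real.exp_add]
  ring

lemma integrable_psiKernel (s : ℝ) {v : ℝ} (hv : 0 < v) : Integrable (psiKernel s v) :=
  (integrable_exp_neg_mul_sq (by positivity)).const_mul _

lemma integral_psiKernel (s : ℝ) {v : ℝ} (hv : 0 < v) :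
    ∫ y, psiKernel s v y = √(4 * π) * (v ^ (s + 1 / 2 - 1) * rexp (-v)) := by
  have h := fourier_psiKernel s hv 0
  simp only [Complex.ofReal_zero, mul_zero, zero_mul, neg_zero, Complex.exp_zero, one_mul,
    ne_eq, OfNat.ofNat_ne_zero, not_false_eq_true, zero_pow, add_zero, integral_complex_ofReal] at h
  exact_mod_cast h

open Complex in
lemma integrable_fourier_psiKernel {s : ℝ} (hs : 0 < s) (ξ : ℝ) :
    Integrable (Function.uncurry fun v y : ℝ ↦ cexp (-(I * ξ * y)) * (psiKernel s v y : ℂ))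
      ((volume.restrict (Ioi 0)).prod volume) := by
  have hnorm : ∀ v y : ℝ, ‖cexp (-(I * ξ * y)) * (psiKernel s v y : ℂ)‖ = |psiKernel s v y| := by
    intro v y
    rw [norm_mul, norm_exp, norm_real, Real.norm_eq_abs]
    simp
  refine (integrable_prod_iff (by unfold psiKernel; fun_prop)).mpr ⟨?_, ?_⟩
  · filter_upwards [ae_restrict_mem measurableSet_Ioi] with v (hv : 0 < v)
    refine (integrable_psiKernel s hv).mono' (by unfold psiKernel; fun_prop) ?_
    filter_upwards with y
    simp only [Function.uncurry_apply_pair, hnorm, abs_of_nonneg (psiKernel_nonneg s y hv.le),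
      le_refl]
  · refine ((GammaIntegral_convergent (by positivity : 0 < s + 1 / 2)).const_mul
      √(4 * π)).congr ?_
    filter_upwards [ae_restrict_mem measurableSet_Ioi] with v (hv : 0 < v)
    simp only [Function.uncurry_apply_pair, hnorm, abs_of_nonneg (psiKernel_nonneg s _ hv.le),
      integral_psiKernel s hv, mul_comm (rexp _)]

open Complex in
lemma psiHat_eq {s : ℝ} (hs : 0 < s) (ξ : ℝ) :
    psiHat s ξ
      = (√2 * Real.Gamma (s + 1 / 2) / Real.Gamma s * (1 + ξ ^ 2) ^ (-(s + 1 / 2)) : ℝ) := by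
  have hb : 0 < 1 + ξ ^ 2 := by positivity
  have hinner : ∫ v in Ioi 0, ∫ y : ℝ, cexp (-(I * ξ * y)) * (psiKernel s v y : ℂ)
      = (√(4 * π) * ((1 + ξ ^ 2) ^ (-(s + 1 / 2)) * Real.Gamma (s + 1 / 2)) : ℝ) := by
    rw [setIntegral_congr_fun measurableSet_Ioi fun v hv ↦ fourier_psiKernel s hv ξ,
      integral_complex_ofReal, integral_const_mul,
      integral_rpow_mul_exp_neg_mul_Ioi (by positivity) hb, one_div, inv_rpow hb.le,
      ← rpow_neg hb.le]
  calc psiHat s ξ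
      = (1 / √(2 * π) : ℂ) * (Real.Gamma s)⁻¹ *
          ∫ y : ℝ, ∫ v in Ioi 0, cexp (-(I * ξ * y)) * (psiKernel s v y : ℂ) := by
        have hpt : ∀ y : ℝ, cexp (-(I * ξ * y)) * (psi s y : ℂ) = ((Real.Gamma s)⁻¹ : ℝ) *
            ∫ v in Ioi 0, cexp (-(I * ξ * y)) * (psiKernel s v y : ℂ) := fun y ↦ by
          rw [psi_eq_integral_psiKernel hs, ofReal_mul, ← integral_complex_ofReal, mul_left_comm,
            ← integral_const_mul]
        simp_rw [psiHat, hpt]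
        rw [integral_const_mul, mul_assoc]
    _ = (1 / √(2 * π) : ℂ) * (Real.Gamma s)⁻¹ *
          (√(4 * π) * ((1 + ξ ^ 2) ^ (-(s + 1 / 2)) * Real.Gamma (s + 1 / 2)) : ℝ) := by
        rw [← integral_integral_swap (integrable_fourier_psiKernel hs ξ), hinner]
    _ = _ := by
        have h4 : √(4 * π) = √2 * √(2 * π) := by
          rw [← Real.sqrt_mul zero_le_two, ← mul_assoc]; norm_num
        have : 0 < √(2 * π) := by positivity
        rw [h4]
        push_cast
        field_simp

lemma integrable_comp_abs {E : Type*} [NormedAddCommGroup E] {f : ℝ → E}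
    (hf : IntegrableOn f (Ioi 0)) : Integrable fun x ↦ f |x| := by
  have h : IntegrableOn (fun x ↦ f |x|) (Ioi 0) :=
    hf.congr_fun (fun x hx ↦ by rw [abs_of_pos hx]) measurableSet_Ioi
  rw [← integrableOn_univ, ← Iio_union_Ici (a := 0), integrableOn_union,
    integrableOn_Ici_iff_integrableOn_Ioi]
  refine ⟨?_, h⟩
  simpa using h.comp_neg

lemma integrable_abs_rpow_mul_exp_neg_mul_sq {a u : ℝ} (ha : -1 < a) (hu : 0 < u) :
    Integrable fun x : ℝ ↦ |x| ^ a * rexp (-u * x ^ 2) := by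
  simpa using integrable_comp_abs (integrableOn_rpow_mul_exp_neg_mul_sq hu ha)

lemma integral_abs_rpow_mul_exp_neg_mul_sq {a u : ℝ} (ha : -1 < a) (hu : 0 < u) :
    ∫ x : ℝ, |x| ^ a * rexp (-u * x ^ 2) = Real.Gamma ((a + 1) / 2) * u ^ (-(a + 1) / 2) := by
  have h := integral_rpow_mul_exp_neg_mul_rpow two_pos ha hu
  simp only [rpow_two] at h
  have habs := integral_comp_abs (f := fun x ↦ x ^ a * rexp (-u * x ^ 2))
  simp only [sq_abs] at habs
  rw [habs, h]
  ring

section BetaIntegral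

variable {a b : ℝ}

lemma one_add_sq_rpow_neg_eq_integral (hb : 0 < b) (x : ℝ) :
    (1 + x ^ 2) ^ (-b)
      = (Real.Gamma b)⁻¹ * ∫ u in Ioi 0, u ^ (b - 1) * rexp (-u) * rexp (-u * x ^ 2) := by
  have h1 : 0 < 1 + x ^ 2 := by positivity
  have hpt : ∀ u : ℝ, u ^ (b - 1) * rexp (-u) * rexp (-u * x ^ 2)
      = u ^ (b - 1) * rexp (-((1 + x ^ 2) * u)) :=
    fun u ↦ by rw [mul_assoc, ← Real.exp_add]; ring_nf
  simp_rw [hpt]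
  rw [integral_rpow_mul_exp_neg_mul_Ioi hb h1, one_div, inv_rpow h1.le, ← rpow_neg h1.le,
    mul_comm, mul_inv_cancel_right₀ (Gamma_pos_of_pos hb).ne']

lemma integral_gaussian_moment_mixture (ha : -1 < a) {u : ℝ} (hu : 0 < u) :
    ∫ x : ℝ, u ^ (b - 1) * rexp (-u) * (|x| ^ a * rexp (-u * x ^ 2))
      = Real.Gamma ((a + 1) / 2) * (rexp (-u) * u ^ (b - (a + 1) / 2 - 1)) := by
  rw [integral_const_mul, integral_abs_rpow_mul_exp_neg_mul_sq ha hu,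
    show b - (a + 1) / 2 - 1 = b - 1 + -(a + 1) / 2 by ring, rpow_add hu]
  ring

lemma integrable_gaussian_moment_mixture (ha : -1 < a) (hab : a + 1 < 2 * b) :
    Integrable
      (Function.uncurry fun u x : ℝ ↦ u ^ (b - 1) * rexp (-u) * (|x| ^ a * rexp (-u * x ^ 2)))
      ((volume.restrict (Ioi 0)).prod volume) := by
  refine (integrable_prod_iff (by fun_prop)).mpr ⟨?_, ?_⟩
  · filter_upwards [ae_restrict_mem measurableSet_Ioi] with u (hu : 0 < u)
    exact (integrable_abs_rpow_mul_exp_neg_mul_sq ha hu).const_mul (u ^ (b - 1) * rexp (-u))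
  · refine ((GammaIntegral_convergent (by linarith : 0 < b - (a + 1) / 2)).const_mul
      (Real.Gamma ((a + 1) / 2))).congr ?_
    filter_upwards [ae_restrict_mem measurableSet_Ioi] with u (hu : 0 < u)
    simp only [Function.uncurry_apply_pair]
    rw [← integral_gaussian_moment_mixture ha hu]
    congr 1 with x
    rw [norm_of_nonneg (by positivity)]

lemma integral_abs_rpow_mul_one_add_sq_rpow_neg (ha : -1 < a) (hab : a + 1 < 2 * b) :
    ∫ x : ℝ, |x| ^ a * (1 + x ^ 2) ^ (-b)
      = Real.Gamma ((a + 1) / 2) * Real.Gamma (b - (a + 1) / 2) / Real.Gamma b := by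
  have hb : 0 < b := by linarith
  have hpt : ∀ x : ℝ, |x| ^ a * (1 + x ^ 2) ^ (-b) = (Real.Gamma b)⁻¹ *
      ∫ u in Ioi 0, u ^ (b - 1) * rexp (-u) * (|x| ^ a * rexp (-u * x ^ 2)) := fun x ↦ by
    rw [one_add_sq_rpow_neg_eq_integral hb, mul_left_comm, ← integral_const_mul]
    congr 2 with u
    ring
  simp_rw [hpt]
  rw [integral_const_mul, ← integral_integral_swap (integrable_gaussian_moment_mixture ha hab),
    setIntegral_congr_fun measurableSet_Ioi fun u hu ↦ integral_gaussian_moment_mixture ha hu,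
    integral_const_mul, ← Gamma_eq_integral (by linarith)]
  ring

end BetaIntegral

lemma rpow_neg_one_le_abs_rpow_mul_one_add_sq_rpow_neg {a b : ℝ} (hb : 0 ≤ b)
    (hab : 2 * b ≤ a + 1) {x : ℝ} (hx : 1 ≤ x) :
    x ^ (-1 : ℝ) ≤ 2 ^ b * (|x| ^ a * (1 + x ^ 2) ^ (-b)) := by
  have hx0 : 0 < x := by linarith
  calc x ^ (-1 : ℝ) = x ^ (2 * b - 1) * (x ^ 2) ^ (-b) := by
        rw [← rpow_two, ← rpow_mul hx0.le, ← rpow_add hx0]; ring_nf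
    _ ≤ x ^ a * ((1 + x ^ 2) / 2) ^ (-b) := by
        refine mul_le_mul (rpow_le_rpow_of_exponent_le hx (by linarith))
          (rpow_le_rpow_of_nonpos (by positivity) (by nlinarith) (by linarith))
          (by positivity) (by positivity)
    _ = 2 ^ b * (|x| ^ a * (1 + x ^ 2) ^ (-b)) := by
        rw [div_rpow (by positivity) zero_le_two, rpow_neg zero_le_two, abs_of_pos hx0]
        field_simp

lemma not_integrable_abs_rpow_mul_one_add_sq_rpow_neg {a b : ℝ} (hb : 0 ≤ b)
    (hab : 2 * b ≤ a + 1) : ¬ Integrable fun x : ℝ ↦ |x| ^ a * (1 + x ^ 2) ^ (-b) := by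
  intro h
  have : IntegrableOn (fun x : ℝ ↦ x ^ (-1 : ℝ)) (Ioi 1) := by
    refine (h.const_mul (2 ^ b)).integrableOn.mono' (by fun_prop) ?_
    filter_upwards [ae_restrict_mem measurableSet_Ioi] with x (hx : 1 < x)
    rw [norm_of_nonneg (by positivity)]
    exact rpow_neg_one_le_abs_rpow_mul_one_add_sq_rpow_neg hb hab hx.le
  exact lt_irrefl _ ((integrableOn_Ioi_rpow_iff one_pos).mp this)

lemma norm_psiHat_sq {s : ℝ} (hs : 0 < s) (ξ : ℝ) :
    ‖psiHat s ξ‖ ^ 2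
      = 2 * Real.Gamma (s + 1 / 2) ^ 2 / Real.Gamma s ^ 2 * (1 + ξ ^ 2) ^ (-(2 * s + 1)) := by
  have hΓ := Gamma_pos_of_pos hs
  have hΓ' := Gamma_pos_of_pos (by positivity : 0 < s + 1 / 2)
  rw [psiHat_eq hs, Complex.norm_real, norm_of_nonneg (by positivity), mul_pow,
    ← rpow_mul_natCast (by positivity), div_pow, mul_pow, sq_sqrt zero_le_two]
  ring_nf

/-- for `s > 0` and `−1/2 < α < 2s + 1/2`,
`∫ |ξ|^{2α}·|ψ̂_s(ξ)|² dξ = (Γ(s+1/2)²/(s·Γ(2s)·Γ(s)²))·Γ(α+1/2)·Γ(2s−α+1/2)`;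
moreover for `α ≥ 2s + 1/2` the integral is infinite. -/
theorem psi_fourier_weighted_norm (s : ℝ) (hs : 0 < s) :
    (∀ α : ℝ, -(1 / 2) < α → α < 2 * s + 1 / 2 →
      ∫ ξ : ℝ, |ξ| ^ (2 * α) * ‖psiHat s ξ‖ ^ 2
        = Real.Gamma (s + 1 / 2) ^ 2 / (s * Real.Gamma (2 * s) * Real.Gamma s ^ 2) *
            Real.Gamma (α + 1 / 2) * Real.Gamma (2 * s - α + 1 / 2)) ∧
    (∀ α : ℝ, 2 * s + 1 / 2 ≤ α →
      ∫⁻ ξ : ℝ, ENNReal.ofReal (|ξ| ^ (2 * α) * ‖psiHat s ξ‖ ^ 2) = ⊤) := by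
  set C := 2 * Real.Gamma (s + 1 / 2) ^ 2 / Real.Gamma s ^ 2 with hC
  have hC0 : 0 < C := by
    have := Gamma_pos_of_pos hs
    have := Gamma_pos_of_pos (by positivity : 0 < s + 1 / 2)
    positivity
  have hweight : ∀ α ξ : ℝ, |ξ| ^ (2 * α) * ‖psiHat s ξ‖ ^ 2
      = C * (|ξ| ^ (2 * α) * (1 + ξ ^ 2) ^ (-(2 * s + 1))) := fun α ξ ↦ by
    rw [norm_psiHat_sq hs]; ring
  refine ⟨fun α hα₁ hα₂ ↦ ?_, fun α hα ↦ ?_⟩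
  · simp_rw [hweight]
    rw [integral_const_mul, integral_abs_rpow_mul_one_add_sq_rpow_neg (by linarith) (by linarith),
      Gamma_add_one (by positivity), show (2 * α + 1) / 2 = α + 1 / 2 by ring,
      show 2 * s + 1 - (α + 1 / 2) = 2 * s - α + 1 / 2 by ring]
    have := Gamma_pos_of_pos (by positivity : 0 < 2 * s)
    rw [hC]
    field_simp
  · simp_rw [hweight]
    rw [← not_ne_iff, lintegral_ofReal_ne_top_iff_integrable (by fun_prop)
      (Eventually.of_forall fun ξ ↦ by positivity), integrable_const_mul_iff hC0.ne'.isUnit]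
    exact not_integrable_abs_rpow_mul_one_add_sq_rpow_neg (by positivity) (by linarith)
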